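/- In the setting of the generalized Boson-Fermion correspondence, for each k ≥ 1 the symmetric functions G_s satisfy the dual Pieri rule: h_k^⊥ G_s = Σ_t ⟨D_k · v_s, v_t⟩ G_t, where h_k^⊥ is the Hall-inner-product adjoint of multiplication by h_k and D_k = Σ_{λ⊢k} z_λ^{-1} B_λ. -/

import Mathlib

open MvPolynomial

/-- `z` statistic of a multiset of parts: `∏_i i^{m_i} m_i!`. -/
def zMult (s : Multiset ℕ) : ℕ :=
  ∏ i ∈ s.toFinset, i ^ (s.count i) * (s.count i).factorial

/-- `z λ = ∏_i i^{m_i(λ)} m_i(λ)!`. -/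
def zPart {n : ℕ} (lam : Nat.Partition n) : ℕ := zMult lam.parts

/-- `p_λ` in `Λ_K = K[p_1,p_2,…]` (the variable `X n` stands for the power sum `p_n`). -/
noncomputable def pProdK (K : Type*) [Field K] (s : Multiset ℕ) : MvPolynomial ℕ K :=
  (s.map (fun i => X i)).prod

/-- `B_λ = B_{λ_1} ⋯ B_{λ_l}` as an operator on a representation. -/
noncomputable def BprodE {K V : Type*} [Field K] [AddCommGroup V] [Module K V]
    (ρ : ℤ → Module.End K V) (s : Multiset ℕ) : Module.End K V :=
  (s.toList.map (fun i => ρ (i : ℤ))).prod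

/-- `B_{-λ} = B_{-λ_1} ⋯ B_{-λ_l}` as an operator on a representation. -/
noncomputable def BprodNegE {K V : Type*} [Field K] [AddCommGroup V] [Module K V]
    (ρ : ℤ → Module.End K V) (s : Multiset ℕ) : Module.End K V :=
  (s.toList.map (fun i => ρ (-(i : ℤ)))).prod

/-- `U_k = ∑_{λ ⊢ k} z_λ⁻¹ B_{-λ}`. -/
noncomputable def UopE {K V : Type*} [Field K] [AddCommGroup V] [Module K V]
    (ρ : ℤ → Module.End K V) (k : ℕ) : Module.End K V :=
  ∑ lam : Nat.Partition k, ((zPart lam : K)⁻¹) • BprodNegE ρ lam.parts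

/-- `D_k = ∑_{λ ⊢ k} z_λ⁻¹ B_λ`. -/
noncomputable def DopE {K V : Type*} [Field K] [AddCommGroup V] [Module K V]
    (ρ : ℤ → Module.End K V) (k : ℕ) : Module.End K V :=
  ∑ lam : Nat.Partition k, ((zPart lam : K)⁻¹) • BprodE ρ lam.parts

/-- The action of `H[a]` on `Λ_K`: `B_{-k}` is multiplication by `a_k p_k` and
`B_k` is `k·∂/∂p_k`, for `k ≥ 1`. -/
noncomputable def BosonOp (K : Type*) [Field K] (a : ℤ → K) (k : ℤ) :
    Module.End K (MvPolynomial ℕ K) :=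
  if 0 < k then (k : K) • (pderiv k.toNat).toLinearMap
  else if k < 0 then LinearMap.mulLeft K (a (-k) • X (-k).toNat)
  else 0

/-- `G_s = ∑_λ z_λ⁻¹ p_λ ⟨B_λ · v_s, v_b⟩ ∈ Λ_K`, the sum running over all partitions of
all sizes (a locally finite sum under the grading assumptions). -/
noncomputable def Gfun {K V S : Type*} [Field K] [AddCommGroup V] [Module K V]
    (v : Module.Basis S K V) (ρ : ℤ → Module.End K V) (bm : S) (s : S) : MvPolynomial ℕ K :=
  ∑ᶠ n : ℕ, ∑ lam : Nat.Partition n,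
    (((zPart lam : K)⁻¹) * (v.repr (BprodE ρ lam.parts (v s)) bm)) • pProdK K lam.parts

/-- `h_k^⊥ = ∑_{λ⊢k} z_λ⁻¹ p_λ^⊥`, where `p_j^⊥ = j·∂/∂p_j`; this is the Hall-inner-product
adjoint of multiplication by `h_k` on `Λ_K`. -/
noncomputable def hPerp (K : Type*) [Field K] (k : ℕ) :
    Module.End K (MvPolynomial ℕ K) :=
  ∑ lam : Nat.Partition k,
    ((zPart lam : K)⁻¹) •
      ((lam.parts.toList.map (fun (i : ℕ) => (i : K) • (pderiv i).toLinearMap)).prod)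

lemma zMult_cons (j : ℕ) (c : Multiset ℕ) :
    zMult (j ::ₘ c) = j * (c.count j + 1) * zMult c := by
  classical
  unfold zMult
  by_cases hj : j ∈ c.toFinset
  · rw [Multiset.toFinset_cons, Finset.insert_eq_self.2 hj]
    rw [← Finset.mul_prod_erase _ (fun i => i ^ ((j ::ₘ c).count i) * ((j ::ₘ c).count i).factorial) hj,
      ← Finset.mul_prod_erase _ (fun i => i ^ (c.count i) * (c.count i).factorial) hj]
    have hprod : ∏ x ∈ c.toFinset.erase j, x ^ ((j ::ₘ c).count x) * ((j ::ₘ c).count x).factorial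
        = ∏ x ∈ c.toFinset.erase j, x ^ (c.count x) * (c.count x).factorial := by
      apply Finset.prod_congr rfl
      intro x hx
      have : x ≠ j := (Finset.mem_erase.1 hx).1
      rw [Multiset.count_cons_of_ne this]
    rw [hprod, Multiset.count_cons_self, pow_succ, Nat.factorial_succ]
    ring
  · rw [Multiset.toFinset_cons]
    have hjc : c.count j = 0 := by
      simpa [Multiset.count_eq_zero] using fun h => hj (Multiset.mem_toFinset.2 h)
    rw [Finset.prod_insert hj, Multiset.count_cons_self, hjc]
    have hprod : ∏ x ∈ c.toFinset, x ^ ((j ::ₘ c).count x) * ((j ::ₘ c).count x).factorial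
        = ∏ x ∈ c.toFinset, x ^ (c.count x) * (c.count x).factorial := by
      apply Finset.prod_congr rfl
      intro x hx
      have : x ≠ j := by rintro rfl; exact hj hx
      rw [Multiset.count_cons_of_ne this]
    rw [hprod]
    simp

lemma zMult_pos {c : Multiset ℕ} (hc : ∀ i ∈ c, 0 < i) : 0 < zMult c := by
  unfold zMult
  apply Finset.prod_pos
  intro i hi
  exact Nat.mul_pos (pow_pos (hc i (Multiset.mem_toFinset.1 hi)) _) (Nat.factorial_pos _)

lemma pProdK_cons (K : Type*) [Field K] (j : ℕ) (c : Multiset ℕ) :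
    pProdK K (j ::ₘ c) = X j * pProdK K c := by
  unfold pProdK; rw [Multiset.map_cons, Multiset.prod_cons]

lemma pderiv_pProdK (K : Type*) [Field K] (j : ℕ) (c : Multiset ℕ) :
    pderiv j (pProdK K c) = (c.count j : K) • pProdK K (c.erase j) := by
  classical
  induction c using Multiset.induction with
  | empty => simp [pProdK]
  | cons i c ih =>
    rw [pProdK_cons, pderiv_mul, ih]
    by_cases hij : i = j
    · subst hij
      rw [Multiset.count_cons_self, Multiset.erase_cons_head, pderiv_X]
      simp only [Pi.single_eq_same]
      by_cases hjc : i ∈ c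
      · rw [mul_smul_comm, ← pProdK_cons, Multiset.cons_erase hjc]
        push_cast
        rw [add_smul, one_smul]
        ring_nf
      · rw [Multiset.count_eq_zero.2 hjc]
        simp
    · rw [Multiset.count_cons_of_ne (Ne.symm hij), Multiset.erase_cons_tail _ hij, pderiv_X,
        Pi.single_eq_of_ne hij, pProdK_cons, mul_smul_comm]
      simp

lemma multiset_cons_le_iff {j : ℕ} {t c : Multiset ℕ} (ht : t ≤ c) :
    j ::ₘ t ≤ c ↔ j ∈ c - t := by
  rw [Multiset.le_iff_count] at ht ⊢
  constructor
  · intro h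
    rw [← Multiset.count_pos, Multiset.count_sub]
    have := h j
    rw [Multiset.count_cons_self] at this
    omega
  · intro h i
    rw [← Multiset.count_pos, Multiset.count_sub] at h
    rcases eq_or_ne i j with rfl | hne
    · rw [Multiset.count_cons_self]; omega
    · rw [Multiset.count_cons_of_ne hne]; exact ht i

lemma multiset_sub_cons (c t : Multiset ℕ) (j : ℕ) :
    c - (j ::ₘ t) = (c - t).erase j := by
  ext i
  rcases eq_or_ne i j with rfl | hne
  · rw [Multiset.count_sub, Multiset.count_erase_self, Multiset.count_sub,
      Multiset.count_cons_self]
    omega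
  · rw [Multiset.count_sub, Multiset.count_erase_of_ne hne, Multiset.count_sub,
      Multiset.count_cons_of_ne hne]

lemma zMult_erase {j : ℕ} {c : Multiset ℕ} (hj : j ∈ c) :
    zMult c = j * c.count j * zMult (c.erase j) := by
  conv_lhs => rw [← Multiset.cons_erase hj]
  rw [zMult_cons, Multiset.count_erase_self]
  have : 0 < c.count j := Multiset.count_pos.2 hj
  congr 2
  omega

/-- Key computation: applying `∏_{j ∈ l} j ∂_j` to `z_c⁻¹ p_c`. -/
lemma perp_prod_pProdK (K : Type*) [Field K] [CharZero K] (l : List ℕ)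
    (hl : ∀ i ∈ l, 0 < i) (c : Multiset ℕ) (hc : ∀ i ∈ c, 0 < i) :
    (zMult c : K)⁻¹ • ((l.map (fun (i : ℕ) => (i : K) • (pderiv i).toLinearMap)).prod
        (pProdK K c))
      = if (l : Multiset ℕ) ≤ c then (zMult (c - (l : Multiset ℕ)) : K)⁻¹ • pProdK K (c - (l : Multiset ℕ)) else 0 := by
  classical
  induction l with
  | nil => simp
  | cons j t ih =>
    have hj : 0 < j := hl j List.mem_cons_self
    have ht : ∀ i ∈ t, 0 < i := fun i hi => hl i (List.mem_cons_of_mem j hi)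
    have hz : (zMult c : K) ≠ 0 := by
      exact_mod_cast (zMult_pos hc).ne'
    have happ : ((t.map (fun (i : ℕ) => (i : K) • (pderiv i).toLinearMap)).prod (pProdK K c))
        = (zMult c : K) • (if (t : Multiset ℕ) ≤ c then (zMult (c - (t : Multiset ℕ)) : K)⁻¹ • pProdK K (c - (t : Multiset ℕ)) else 0) := by
      rw [← ih ht, smul_smul, mul_inv_cancel₀ hz, one_smul]
    have hcons : ((j :: t : List ℕ) : Multiset ℕ) = j ::ₘ (t : Multiset ℕ) := rfl
    rw [List.map_cons, List.prod_cons, Module.End.mul_apply, happ]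
    by_cases hts : (t : Multiset ℕ) ≤ c
    · rw [if_pos hts]
      set d : Multiset ℕ := c - (t : Multiset ℕ) with hd
      have hdpos : ∀ i ∈ d, 0 < i := fun i hi =>
        hc i (Multiset.mem_of_le (Multiset.sub_le_self c _) hi)
      have hder : (pderiv j) (pProdK K d) = (d.count j : K) • pProdK K (d.erase j) :=
        pderiv_pProdK K j d
      by_cases hjct : j ∈ d
      · rw [hcons, if_pos ((multiset_cons_le_iff hts).2 hjct), multiset_sub_cons]
        have hzd : (zMult d : K) ≠ 0 := by exact_mod_cast (zMult_pos hdpos).ne'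
        have hze : (zMult (d.erase j) : K) ≠ 0 := by
          have : ∀ i ∈ d.erase j, 0 < i := fun i hi =>
            hdpos i (Multiset.mem_of_le (Multiset.erase_le _ _) hi)
          exact_mod_cast (zMult_pos this).ne'
        have hcount : (0:ℕ) < d.count j := Multiset.count_pos.2 hjct
        have hzrel : (zMult d : K) = (j : K) * (d.count j : K) * (zMult (d.erase j) : K) := by
          rw [zMult_erase hjct]; push_cast; ring
        calc (zMult c : K)⁻¹ • ((j:K) • (pderiv j).toLinearMap)
              ((zMult c : K) • (zMult d : K)⁻¹ • pProdK K d)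
            = ((zMult c : K)⁻¹ * ((j:K) * ((zMult c : K) * ((zMult d : K)⁻¹ * (d.count j : K))))) • pProdK K (d.erase j) := by
              rw [map_smul, map_smul, LinearMap.smul_apply]
              show (zMult c : K)⁻¹ • ((zMult c : K) • ((zMult d : K)⁻¹ • ((j:K) • pderiv j (pProdK K d)))) = _
              rw [hder]
              rw [smul_smul, smul_smul, smul_smul, smul_smul]
              congr 1
              ring
          _ = (zMult (d.erase j) : K)⁻¹ • pProdK K (d.erase j) := by
              congr 1
              rw [hzrel]
              have hjK : (j : K) ≠ 0 := by exact_mod_cast hj.ne'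
              have hcK : ((d.count j : ℕ) : K) ≠ 0 := by exact_mod_cast hcount.ne'
              field_simp
      · rw [hcons, if_neg (fun h => hjct ((multiset_cons_le_iff hts).1 h))]
        rw [map_smul, map_smul, LinearMap.smul_apply]
        show (zMult c : K)⁻¹ • ((zMult c : K) • ((zMult d : K)⁻¹ • ((j:K) • pderiv j (pProdK K d)))) = 0
        rw [hder, Multiset.count_eq_zero.2 hjct]
        simp
    · rw [if_neg hts]
      have : ¬ ((j :: t : List ℕ) : Multiset ℕ) ≤ c := by
        rw [hcons]
        intro hle
        exact hts (le_trans (Multiset.le_cons_self _ _) hle)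
      rw [if_neg this]
      simp

lemma BprodE_eq {K V : Type*} [Field K] [AddCommGroup V] [Module K V]
    (ρ : ℤ → Module.End K V) (s : Multiset ℕ) :
    BprodE ρ s = ((s.toList.map (fun i : ℕ => ρ (i : ℤ)))).prod := by
  unfold BprodE
  congr 1
  show List.map ρ ((s.toList).flatMap fun (a : ℕ) => [(a : ℤ)]) = _
  induction s.toList with
  | nil => rfl
  | cons a l ih => simpa using ih

section Grading

variable {K V S : Type*} [Field K] [AddCommGroup V] [Module K V]
  (v : Module.Basis S K V) (ρ : ℤ → Module.End K V) (deg : S → ℤ) (m : ℤ)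

lemma span_step
    (hgrade : ∀ k : ℤ, k ≠ 0 → ∀ s : S,
      ρ k (v s) ∈ Submodule.span K (v '' {t | deg t = deg s - m * k}))
    (k : ℤ) (hk : k ≠ 0) (d : ℤ) {x : V}
    (hx : x ∈ Submodule.span K (v '' {t | deg t = d})) :
    ρ k x ∈ Submodule.span K (v '' {t | deg t = d - m * k}) := by
  induction hx using Submodule.span_induction with
  | mem y hy =>
    obtain ⟨t, ht, rfl⟩ := hy
    have := hgrade k hk t
    rw [Set.mem_setOf_eq] at ht
    rwa [ht] at this
  | zero => simp
  | add y z hy hz hy' hz' => rw [map_add]; exact Submodule.add_mem _ hy' hz'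
  | smul a y hy hy' => rw [map_smul]; exact Submodule.smul_mem _ _ hy'

lemma prodB_mem
    (hgrade : ∀ k : ℤ, k ≠ 0 → ∀ s : S,
      ρ k (v s) ∈ Submodule.span K (v '' {t | deg t = deg s - m * k}))
    (l : List ℕ) (hl : ∀ i ∈ l, 0 < i) (d : ℤ) {x : V}
    (hx : x ∈ Submodule.span K (v '' {t | deg t = d})) :
    ((l.map (fun i : ℕ => ρ (i : ℤ))).prod) x
      ∈ Submodule.span K (v '' {t | deg t = d - m * (l.sum : ℤ)}) := by
  induction l generalizing d x with
  | nil =>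
    simpa using hx
  | cons j t ih =>
    have hj : 0 < j := hl j List.mem_cons_self
    have ht : ∀ i ∈ t, 0 < i := fun i hi => hl i (List.mem_cons_of_mem j hi)
    rw [List.map_cons, List.prod_cons, Module.End.mul_apply]
    have h1 := span_step v ρ deg m hgrade (j : ℤ) (by exact_mod_cast hj.ne') _ (ih ht d hx)
    have heq : d - m * (t.sum : ℤ) - m * (j : ℤ) = d - m * (((j :: t : List ℕ).sum : ℕ) : ℤ) := by
      rw [List.sum_cons]
      push_cast
      ring
    rwa [heq] at h1

lemma repr_zero_of_span {A : Set S} {x : V}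
    (hx : x ∈ Submodule.span K (v '' A)) {b : S} (hb : b ∉ A) :
    v.repr x b = 0 := by
  classical
  have hker : Submodule.span K (v '' A) ≤
      LinearMap.ker ((Finsupp.lapply b).comp (v.repr : V →ₗ[K] (S →₀ K))) := by
    rw [Submodule.span_le]
    rintro _ ⟨t, ht, rfl⟩
    simp only [SetLike.mem_coe, LinearMap.mem_ker, LinearMap.comp_apply, Finsupp.lapply_apply,
      LinearEquiv.coe_coe, Module.Basis.repr_self]
    rw [Finsupp.single_apply, if_neg]
    rintro rfl
    exact hb ht
  exact hker hx

end Grading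

section Ops

variable {K V : Type*} [Field K] [AddCommGroup V] [Module K V]

lemma BprodE_add (ρ : ℤ → Module.End K V)
    (hcomm : ∀ i j : ℕ, 0 < i → 0 < j → Commute (ρ (i : ℤ)) (ρ (j : ℤ)))
    (s₁ s₂ : Multiset ℕ) (h₁ : ∀ i ∈ s₁, 0 < i) (h₂ : ∀ i ∈ s₂, 0 < i) :
    BprodE ρ (s₁ + s₂) = BprodE ρ s₁ * BprodE ρ s₂ := by
  rw [BprodE_eq, BprodE_eq, BprodE_eq, ← List.prod_append, ← List.map_append]
  have hperm : ((s₁ + s₂).toList).Perm (s₁.toList ++ s₂.toList) := by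
    rw [← Multiset.coe_eq_coe, Multiset.coe_toList, ← Multiset.coe_add,
      Multiset.coe_toList, Multiset.coe_toList]
  apply List.Perm.prod_eq' (hperm.map _)
  apply List.pairwise_of_forall_mem_list
  intro f hf g hg
  simp only [List.mem_map] at hf hg
  obtain ⟨i, hi, rfl⟩ := hf
  obtain ⟨j, hj, rfl⟩ := hg
  have hi' : i ∈ s₁ + s₂ := by rw [← Multiset.mem_toList]; exact hi
  have hj' : j ∈ s₁ + s₂ := by rw [← Multiset.mem_toList]; exact hj
  rcases Multiset.mem_add.1 hi' with h | h <;> rcases Multiset.mem_add.1 hj' with h' | h' <;>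
    exact hcomm i j (by first | exact h₁ i h | exact h₂ i h) (by first | exact h₁ j h' | exact h₂ j h')

end Ops

lemma sum_partition_reindex {M : Type*} [AddCommMonoid M] {k n' : ℕ}
    (μ : Nat.Partition k) (g : Multiset ℕ → M) :
    (∑ lam : Nat.Partition (n' + k),
        if μ.parts ≤ lam.parts then g (lam.parts - μ.parts) else 0)
      = ∑ nu : Nat.Partition n', g nu.parts := by
  classical
  rw [← Finset.sum_filter]
  refine Finset.sum_bij'
    (fun lam hlam => Nat.Partition.mk (lam.parts - μ.parts)
      (fun {i} hi => lam.parts_pos (Multiset.mem_of_le (Multiset.sub_le_self _ _) hi))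
      (by
        have hle : μ.parts ≤ lam.parts := (Finset.mem_filter.1 hlam).2
        have h2 := congrArg Multiset.sum (tsub_add_cancel_of_le hle)
        rw [Multiset.sum_add, μ.parts_sum, lam.parts_sum] at h2
        omega))
    (fun nu _ => Nat.Partition.mk (nu.parts + μ.parts)
      (fun {i} hi => by
        rcases Multiset.mem_add.1 hi with h | h
        · exact nu.parts_pos h
        · exact μ.parts_pos h)
      (by rw [Multiset.sum_add, nu.parts_sum, μ.parts_sum]))
    ?_ ?_ ?_ ?_ ?_
  · intro lam hlam
    exact Finset.mem_univ _
  · intro nu hnu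
    rw [Finset.mem_filter]
    exact ⟨Finset.mem_univ _, Multiset.le_add_left _ _⟩
  · intro lam hlam
    have hle : μ.parts ≤ lam.parts := (Finset.mem_filter.1 hlam).2
    exact Nat.Partition.ext (tsub_add_cancel_of_le hle)
  · intro nu hnu
    refine Nat.Partition.ext ?_
    show nu.parts + μ.parts - μ.parts = nu.parts
    ext i
    rw [Multiset.count_sub, Multiset.count_add]
    omega
  · intro lam hlam
    rfl

lemma perp_prod_apply (K : Type*) [Field K] [CharZero K] {k : ℕ}
    (mu : Nat.Partition k) (c : Multiset ℕ) (hc : ∀ i ∈ c, 0 < i) :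
    ((mu.parts.toList.map (fun (i : ℕ) => (i : K) • (pderiv i).toLinearMap)).prod)
        (pProdK K c)
      = (zMult c : K) • (if mu.parts ≤ c then
          (zMult (c - mu.parts) : K)⁻¹ • pProdK K (c - mu.parts) else 0) := by
  have hzc : (zMult c : K) ≠ 0 := by exact_mod_cast (zMult_pos hc).ne'
  have hq := perp_prod_pProdK K mu.parts.toList
    (fun i hi => mu.parts_pos (by rwa [← Multiset.mem_toList])) c hc
  rw [Multiset.coe_toList] at hq
  rw [← hq, smul_smul, mul_inv_cancel₀ hzc, one_smul]

section Core

variable {K V S : Type*} [Field K] [CharZero K] [AddCommGroup V] [Module K V]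

lemma core_identity (v : Module.Basis S K V) (ρ : ℤ → Module.End K V)
    (hcomm : ∀ i j : ℕ, 0 < i → 0 < j → Commute (ρ (i : ℤ)) (ρ (j : ℤ)))
    (bm : S) (k n' : ℕ) (s : S) :
    hPerp K k (∑ lam : Nat.Partition (n' + k),
        (((zPart lam : K)⁻¹) * (v.repr (BprodE ρ lam.parts (v s)) bm)) • pProdK K lam.parts)
      = ∑ nu : Nat.Partition n',
          (((zPart nu : K)⁻¹) * (v.repr (BprodE ρ nu.parts (DopE ρ k (v s))) bm))
            • pProdK K nu.parts := by
  classical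
  have key : ∀ (mu : Nat.Partition k) (c : Multiset ℕ) (hc : ∀ i ∈ c, 0 < i),
      ((mu.parts.toList.map (fun (i : ℕ) => (i : K) • (pderiv i).toLinearMap)).prod)
          (pProdK K c)
        = (zMult c : K) • (if mu.parts ≤ c then
            (zMult (c - mu.parts) : K)⁻¹ • pProdK K (c - mu.parts) else 0) :=
    fun mu c hc => perp_prod_apply K mu c hc
  rw [hPerp, LinearMap.sum_apply]
  simp only [zPart]
  have lhs_eq : ∀ mu : Nat.Partition k,
      (((zMult mu.parts : K)⁻¹) •
          ((mu.parts.toList.map (fun (i : ℕ) => (i : K) • (pderiv i).toLinearMap)).prod))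
        (∑ lam : Nat.Partition (n' + k),
          (((zMult lam.parts : K)⁻¹) * (v.repr (BprodE ρ lam.parts (v s)) bm))
            • pProdK K lam.parts)
      = ∑ nu : Nat.Partition n',
          (((zMult mu.parts : K)⁻¹ * (zMult nu.parts : K)⁻¹) *
            (v.repr (BprodE ρ (nu.parts + mu.parts) (v s)) bm)) • pProdK K nu.parts := by
    intro mu
    rw [LinearMap.smul_apply, map_sum, Finset.smul_sum]
    rw [← sum_partition_reindex (n' := n') mu (fun e =>
      (((zMult mu.parts : K)⁻¹ * (zMult e : K)⁻¹) *
        (v.repr (BprodE ρ (e + mu.parts) (v s)) bm)) • pProdK K e)]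
    apply Finset.sum_congr rfl
    intro lam _
    rw [map_smul, key mu lam.parts (fun i hi => lam.parts_pos hi)]
    have hzl : (zMult lam.parts : K) ≠ 0 := by
      exact_mod_cast (zMult_pos (fun i hi => lam.parts_pos hi)).ne'
    by_cases hle : mu.parts ≤ lam.parts
    · have hzm : (zMult mu.parts : K) ≠ 0 := by
        exact_mod_cast (zMult_pos (fun i hi => mu.parts_pos hi)).ne'
      have hzsub : (zMult (lam.parts - mu.parts) : K) ≠ 0 := by
        have : ∀ i ∈ lam.parts - mu.parts, 0 < i := fun i hi =>
          lam.parts_pos (Multiset.mem_of_le (Multiset.sub_le_self _ _) hi)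
        exact_mod_cast (zMult_pos this).ne'
      rw [if_pos hle, if_pos hle, smul_smul, smul_smul, smul_smul,
        tsub_add_cancel_of_le hle]
      congr 1
      field_simp
    · rw [if_neg hle, if_neg hle]
      simp
  have rhs_eq : ∀ nu : Nat.Partition n',
      (v.repr (BprodE ρ nu.parts (DopE ρ k (v s))) bm)
        = ∑ mu : Nat.Partition k,
            ((zMult mu.parts : K)⁻¹) * (v.repr (BprodE ρ (nu.parts + mu.parts) (v s)) bm) := by
    intro nu
    rw [DopE]
    simp only [zPart]
    rw [LinearMap.sum_apply, map_sum, map_sum, Finsupp.finset_sum_apply]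
    apply Finset.sum_congr rfl
    intro mu _
    rw [LinearMap.smul_apply, map_smul, map_smul, Finsupp.smul_apply, smul_eq_mul,
      BprodE_add ρ hcomm nu.parts mu.parts (fun i hi => nu.parts_pos hi)
        (fun i hi => mu.parts_pos hi), Module.End.mul_apply]
  simp only [lhs_eq]
  simp only [rhs_eq]
  rw [Finset.sum_comm]
  apply Finset.sum_congr rfl
  intro nu _
  rw [Finset.mul_sum, Finset.sum_smul]
  apply Finset.sum_congr rfl
  intro mu _
  congr 1
  ring

end Core

lemma multiset_sum_le_of_le {s t : Multiset ℕ} (h : s ≤ t) : s.sum ≤ t.sum := by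
  obtain ⟨u, rfl⟩ := Multiset.le_iff_exists_add.1 h
  rw [Multiset.sum_add]
  exact Nat.le_add_right _ _

section Main

variable {K V S : Type*} [Field K] [CharZero K] [AddCommGroup V] [Module K V]

lemma BprodE_mem_span (v : Module.Basis S K V) (ρ : ℤ → Module.End K V)
    (deg : S → ℤ) (m : ℤ)
    (hgrade : ∀ k : ℤ, k ≠ 0 → ∀ s : S,
      ρ k (v s) ∈ Submodule.span K (v '' {t | deg t = deg s - m * k}))
    {n : ℕ} (lam : Nat.Partition n) (t : S) :
    BprodE ρ lam.parts (v t)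
      ∈ Submodule.span K (v '' {u | deg u = deg t - m * n}) := by
  have hx : v t ∈ Submodule.span K (v '' {u | deg u = deg t}) :=
    Submodule.subset_span ⟨t, rfl, rfl⟩
  have h := prodB_mem v ρ deg m hgrade lam.parts.toList
    (fun i hi => lam.parts_pos (by rwa [← Multiset.mem_toList])) (deg t) hx
  have hsum : ((lam.parts.toList.sum : ℕ) : ℤ) = (n : ℤ) := by
    rw [Multiset.sum_toList, lam.parts_sum]
  rw [hsum] at h
  rw [BprodE_eq]
  exact h

noncomputable def Fpart (v : Module.Basis S K V) (ρ : ℤ → Module.End K V) (bm t : S)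
    (n : ℕ) : MvPolynomial ℕ K :=
  ∑ lam : Nat.Partition n,
    (((zPart lam : K)⁻¹) * (v.repr (BprodE ρ lam.parts (v t)) bm)) • pProdK K lam.parts

lemma Gfun_eq_finsum (v : Module.Basis S K V) (ρ : ℤ → Module.End K V) (bm t : S) :
    Gfun v ρ bm t = ∑ᶠ n : ℕ, Fpart v ρ bm t n := rfl

end Main


/-- dual Pieri rule: in the setting of the generalized Boson–Fermion
correspondence, `h_k^⊥ G_s = ∑_t ⟨D_k·v_s, v_t⟩ G_t` for each `k ≥ 1`. -/
theorem generalized_dual_pieri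
    {K V S : Type*} [Field K] [CharZero K] [AddCommGroup V] [Module K V]
    (v : Module.Basis S K V)
    (a : ℤ → K) (ha : ∀ l : ℤ, l ≠ 0 → a l ≠ 0) (haskew : ∀ l : ℤ, a (-l) = a l)
    (ρ : ℤ → Module.End K V)
    (hrel : ∀ k l : ℤ, k ≠ 0 → l ≠ 0 →
      ρ k * ρ l - ρ l * ρ k = if k = -l then ((k : K) * a k) • (1 : Module.End K V) else 0)
    (deg : S → ℤ) (m : ℤ) (hm : m ≠ 0)
    (hgrade : ∀ k : ℤ, k ≠ 0 → ∀ s : S,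
      ρ k (v s) ∈ Submodule.span K (v '' {t | deg t = deg s - m * k}))
    (hfin : ∀ d : ℤ, {t : S | deg t = d}.Finite)
    (bm : S) (hhw : ∀ k : ℤ, 0 < k → ρ k (v bm) = 0)
    (k : ℕ) (hk : 0 < k) (s : S) :
    hPerp K k (Gfun v ρ bm s) =
      (v.repr (DopE ρ k (v s))).sum (fun t c => c • Gfun v ρ bm t) := by
  classical
  have hcomm : ∀ i j : ℕ, 0 < i → 0 < j → Commute (ρ (i : ℤ)) (ρ (j : ℤ)) := by
    intro i j hi hj
    have hi' : ((i : ℤ)) ≠ 0 := by exact_mod_cast hi.ne'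
    have hj' : ((j : ℤ)) ≠ 0 := by exact_mod_cast hj.ne'
    have h := hrel (i : ℤ) (j : ℤ) hi' hj'
    rw [if_neg (by
      intro he
      have h1 : (0 : ℤ) < (i : ℤ) := by exact_mod_cast hi
      have h2 : (0 : ℤ) < (j : ℤ) := by exact_mod_cast hj
      omega)] at h
    exact sub_eq_zero.1 h
  have hFsupp : ∀ t n, Fpart v ρ bm t n ≠ 0 → (m * n : ℤ) = deg t - deg bm := by
    intro t n hne
    by_contra hmn
    apply hne
    apply Finset.sum_eq_zero
    intro lam _
    have hmem := BprodE_mem_span v ρ deg m hgrade lam t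
    have hrepr : v.repr (BprodE ρ lam.parts (v t)) bm = 0 := by
      apply repr_zero_of_span v hmem
      intro hbm
      rw [Set.mem_setOf_eq] at hbm
      apply hmn
      linarith
    rw [hrepr, mul_zero, zero_smul]
  have hDspan : DopE ρ k (v s)
      ∈ Submodule.span K (v '' {u | deg u = deg s - m * k}) := by
    rw [DopE, LinearMap.sum_apply]
    apply Submodule.sum_mem
    intro mu _
    rw [LinearMap.smul_apply]
    exact Submodule.smul_mem _ _ (BprodE_mem_span v ρ deg m hgrade mu s)
  have hdeg_supp : ∀ t ∈ (v.repr (DopE ρ k (v s))).support, deg t = deg s - m * k := by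
    intro t ht
    by_contra hne
    exact (Finsupp.mem_support_iff.1 ht) (repr_zero_of_span v hDspan hne)
  by_cases hex : ∃ n0 : ℕ, (m * n0 : ℤ) = deg s - deg bm
  · obtain ⟨n0, hn0⟩ := hex
    have hGs : Gfun v ρ bm s = Fpart v ρ bm s n0 := by
      rw [Gfun_eq_finsum]
      apply finsum_eq_single
      intro n hn
      by_contra h
      apply hn
      have h1 := hFsupp s n h
      have h2 : (n : ℤ) = (n0 : ℤ) := mul_left_cancel₀ hm (by rw [h1, hn0])
      exact_mod_cast h2
    by_cases hkn : k ≤ n0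
    · obtain ⟨n', rfl⟩ : ∃ n', n0 = n' + k := ⟨n0 - k, by omega⟩
      have hGt : ∀ t ∈ (v.repr (DopE ρ k (v s))).support,
          Gfun v ρ bm t = Fpart v ρ bm t n' := by
        intro t ht
        have hdegt := hdeg_supp t ht
        rw [Gfun_eq_finsum]
        apply finsum_eq_single
        intro n hn
        by_contra h
        apply hn
        have h1 := hFsupp t n h
        rw [hdegt] at h1
        have h2 : (m : ℤ) * (n : ℤ) = m * (n' : ℤ) := by
          push_cast at hn0 ⊢
          linarith
        exact_mod_cast mul_left_cancel₀ hm h2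
      rw [hGs]
      rw [show Fpart v ρ bm s (n' + k) = ∑ lam : Nat.Partition (n' + k),
        (((zPart lam : K)⁻¹) * (v.repr (BprodE ρ lam.parts (v s)) bm)) • pProdK K lam.parts
        from rfl]
      rw [core_identity v ρ hcomm bm k n' s, Finsupp.sum]
      set x := DopE ρ k (v s) with hxdef
      have hstep : (∑ t ∈ (v.repr x).support, v.repr x t • Gfun v ρ bm t)
          = ∑ t ∈ (v.repr x).support, v.repr x t • Fpart v ρ bm t n' :=
        Finset.sum_congr rfl (fun t ht => by rw [hGt t ht])
      rw [hstep]
      have hexp : ∀ nu : Nat.Partition n',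
          v.repr (BprodE ρ nu.parts x) bm
            = ∑ t ∈ (v.repr x).support,
                v.repr x t * v.repr (BprodE ρ nu.parts (v t)) bm := by
        intro nu
        set L : V →ₗ[K] K := (Finsupp.lapply bm).comp
          (((v.repr : V →ₗ[K] (S →₀ K))).comp (BprodE ρ nu.parts)) with hLdef
        calc v.repr (BprodE ρ nu.parts x) bm = L x := rfl
          _ = L (Finsupp.linearCombination K (v : S → V) (v.repr x)) := by
              rw [Module.Basis.linearCombination_repr]
          _ = ((v.repr x).sum fun t c => L (c • v t)) := by
              rw [Finsupp.linearCombination_apply, map_finsuppSum]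
          _ = ∑ t ∈ (v.repr x).support,
                v.repr x t * v.repr (BprodE ρ nu.parts (v t)) bm := by
              rw [Finsupp.sum]
              apply Finset.sum_congr rfl
              intro t _
              rw [map_smul, smul_eq_mul]
              rfl
      have hRHS : ∀ t, (v.repr x) t • Fpart v ρ bm t n'
          = ∑ nu : Nat.Partition n',
              ((v.repr x) t * ((zPart nu : K)⁻¹ * v.repr (BprodE ρ nu.parts (v t)) bm))
                • pProdK K nu.parts := by
        intro t
        rw [show Fpart v ρ bm t n' = ∑ lam : Nat.Partition n',
          (((zPart lam : K)⁻¹) * (v.repr (BprodE ρ lam.parts (v t)) bm)) • pProdK K lam.parts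
          from rfl, Finset.smul_sum]
        apply Finset.sum_congr rfl
        intro nu _
        rw [smul_smul]
      simp only [hexp, hRHS, Finset.mul_sum, Finset.sum_smul]
      rw [Finset.sum_comm]
      apply Finset.sum_congr rfl
      intro t _
      apply Finset.sum_congr rfl
      intro nu _
      congr 1
      ring
    · rw [hGs]
      have hL : hPerp K k (Fpart v ρ bm s n0) = 0 := by
        rw [hPerp, LinearMap.sum_apply]
        apply Finset.sum_eq_zero
        intro mu _
        have hz : ∀ lam : Nat.Partition n0,
            ((mu.parts.toList.map (fun (i : ℕ) => (i : K) • (pderiv i).toLinearMap)).prod)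
              ((((zPart lam : K)⁻¹) * (v.repr (BprodE ρ lam.parts (v s)) bm))
                • pProdK K lam.parts) = 0 := by
          intro lam
          rw [map_smul, perp_prod_apply K mu lam.parts (fun i hi => lam.parts_pos hi),
            if_neg, smul_zero, smul_zero]
          intro hle
          have hsum := multiset_sum_le_of_le hle
          rw [mu.parts_sum, lam.parts_sum] at hsum
          omega
        rw [LinearMap.smul_apply, show Fpart v ρ bm s n0 = ∑ lam : Nat.Partition n0,
          (((zPart lam : K)⁻¹) * (v.repr (BprodE ρ lam.parts (v s)) bm)) • pProdK K lam.parts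
          from rfl, map_sum, Finset.sum_eq_zero (fun lam _ => hz lam), smul_zero]
      rw [hL, Finsupp.sum]
      symm
      apply Finset.sum_eq_zero
      intro t ht
      have hGt0 : Gfun v ρ bm t = 0 := by
        rw [Gfun_eq_finsum]
        apply finsum_eq_zero_of_forall_eq_zero
        intro n
        by_contra h
        have h1 := hFsupp t n h
        rw [hdeg_supp t ht] at h1
        have h3 : (m : ℤ) * ((n : ℤ) + (k : ℤ)) = m * (n0 : ℤ) := by
          rw [mul_add]
          linarith
        have h4 : (n : ℤ) + (k : ℤ) = (n0 : ℤ) := mul_left_cancel₀ hm h3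
        have h5 : n + k = n0 := by exact_mod_cast h4
        omega
      rw [hGt0, smul_zero]
  · have hGs : Gfun v ρ bm s = 0 := by
      rw [Gfun_eq_finsum]
      apply finsum_eq_zero_of_forall_eq_zero
      intro n
      by_contra h
      exact hex ⟨n, hFsupp s n h⟩
    rw [hGs, map_zero, Finsupp.sum]
    symm
    apply Finset.sum_eq_zero
    intro t ht
    have hGt0 : Gfun v ρ bm t = 0 := by
      rw [Gfun_eq_finsum]
      apply finsum_eq_zero_of_forall_eq_zero
      intro n
      by_contra h
      have h1 := hFsupp t n h
      rw [hdeg_supp t ht] at h1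
      refine hex ⟨n + k, ?_⟩
      push_cast
      push_cast at h1
      linarith
    rw [hGt0, smul_zero]
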